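/- Every classful subgroup H of the group P of all orientation-preserving PL homeomorphisms of [0,1] acts transitively on (0,1). -/

import Mathlib

open Set

/-- An orientation-preserving piecewise linear homeomorphism of `[0,1]`,
viewed as a map of `ℝ` extended by the identity outside `[0,1]`. -/
def IsPLHomeo (f : ℝ → ℝ) : Prop :=
  Function.Bijective f ∧ StrictMono f ∧ f 0 = 0 ∧ f 1 = 1 ∧
  (∀ x, x ∉ Icc (0 : ℝ) 1 → f x = x) ∧
  ∃ n : ℕ, ∃ x : Fin (n + 1) → ℝ, StrictMono x ∧ x 0 = 0 ∧ x (Fin.last n) = 1 ∧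
    ∀ i : Fin n, ∃ c d : ℝ, ∀ t ∈ Icc (x i.castSucc) (x i.succ), f t = c * t + d

/-- The support of a map: the closure of its set of non-fixed points. -/
def Supp (f : ℝ → ℝ) : Set ℝ := closure {x | f x ≠ x}

theorem Equiv.Perm.apply_inv_self {α : Type*} (f : Equiv.Perm α) (x : α) : f (f⁻¹ x) = x :=
  f.apply_symm_apply x

theorem Equiv.Perm.inv_apply_self {α : Type*} (f : Equiv.Perm α) (x : α) : f⁻¹ (f x) = x :=
  f.symm_apply_apply x

namespace ClassfulAux

/-- PL map with slope `ξ` on `[0,p]` and the matching slope on `[p,1]`. -/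
noncomputable def plmap (ξ p : ℝ) : ℝ → ℝ := fun x =>
  if x < 0 then x
  else if x ≤ p then ξ * x
  else if x ≤ 1 then (1 - ξ*p)/(1-p) * x + (1 - (1 - ξ*p)/(1-p))
  else x

variable {ξ p x : ℝ}

lemma plmap_evalA (hx : x < 0) : plmap ξ p x = x := by
  unfold plmap; rw [if_pos hx]

lemma plmap_evalB (hx0 : 0 ≤ x) (hxp : x ≤ p) : plmap ξ p x = ξ * x := by
  unfold plmap; rw [if_neg (not_lt.mpr hx0), if_pos hxp]

lemma plmap_evalC (hp0 : 0 < p) (hxp : p < x) (hx1 : x ≤ 1) :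
    plmap ξ p x = (1 - ξ*p)/(1-p) * x + (1 - (1 - ξ*p)/(1-p)) := by
  unfold plmap; rw [if_neg (not_lt.mpr (by linarith)), if_neg (not_le.mpr hxp), if_pos hx1]

lemma plmap_evalD (hx : 1 < x) (hp1 : p < 1) : plmap ξ p x = x := by
  unfold plmap
  rw [if_neg (not_lt.mpr (by linarith)), if_neg (not_le.mpr (by linarith)),
    if_neg (not_le.mpr hx)]

lemma plmap_strictMono (hξ : 0 < ξ) (hp0 : 0 < p) (hp1 : p < 1) (hξp : ξ*p < 1) :
    StrictMono (plmap ξ p) := by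
  have h1p : (0:ℝ) < 1 - p := by linarith
  have h1ξp : (0:ℝ) < 1 - ξ*p := by linarith
  have hm : 0 < (1-ξ*p)/(1-p) := div_pos h1ξp h1p
  have key : (1-ξ*p)/(1-p) * (1-p) = 1 - ξ*p := div_mul_cancel₀ _ h1p.ne'
  -- lower bound for values at points `> p`
  have lbC : ∀ y, p < y → y ≤ 1 → ξ*p < plmap ξ p y := by
    intro y h1 h2
    rw [plmap_evalC hp0 h1 h2]
    nlinarith [mul_pos hm (by linarith : (0:ℝ) < y - p)]
  have ubC : ∀ y, p < y → y ≤ 1 → plmap ξ p y ≤ 1 := by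
    intro y h1 h2
    rw [plmap_evalC hp0 h1 h2]
    nlinarith [mul_nonneg hm.le (by linarith : (0:ℝ) ≤ 1 - y)]
  intro x y hxy
  rcases lt_or_ge x 0 with hx | hx
  · rw [plmap_evalA hx]
    rcases lt_or_ge y 0 with hy | hy
    · rw [plmap_evalA hy]; exact hxy
    · rcases le_or_gt y p with hyp | hyp
      · rw [plmap_evalB hy hyp]; nlinarith [mul_nonneg hξ.le hy]
      · rcases le_or_gt y 1 with hy1 | hy1
        · have := lbC y hyp hy1; nlinarith [mul_pos hξ hp0]
        · rw [plmap_evalD hy1 hp1]; linarith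
  · rcases le_or_gt x p with hxp | hxp
    · rw [plmap_evalB hx hxp]
      rcases le_or_gt y p with hyp | hyp
      · rw [plmap_evalB (by linarith) hyp]; nlinarith
      · have hxple : ξ*x ≤ ξ*p := by nlinarith
        rcases le_or_gt y 1 with hy1 | hy1
        · have := lbC y hyp hy1; linarith
        · rw [plmap_evalD hy1 hp1]; nlinarith
    · rcases le_or_gt x 1 with hx1 | hx1
      · rw [plmap_evalC hp0 hxp hx1]
        rcases le_or_gt y 1 with hy1 | hy1
        · rw [plmap_evalC hp0 (by linarith) hy1]
          nlinarith [mul_pos hm (by linarith : (0:ℝ) < y - x)]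
        · rw [plmap_evalD hy1 hp1]
          have := ubC x hxp hx1
          rw [plmap_evalC hp0 hxp hx1] at this; linarith
      · rw [plmap_evalD hx1 hp1, plmap_evalD (by linarith) hp1]; exact hxy

lemma plmap_inv (hξ : 0 < ξ) (hp0 : 0 < p) (hp1 : p < 1) (hξp : ξ*p < 1) :
    ∀ x, plmap ξ⁻¹ (ξ*p) (plmap ξ p x) = x := by
  intro x
  have h1p : (0:ℝ) < 1 - p := by linarith
  have h1ξp : (0:ℝ) < 1 - ξ*p := by linarith
  have hm : 0 < (1-ξ*p)/(1-p) := div_pos h1ξp h1p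
  have key : (1-ξ*p)/(1-p) * (1-p) = 1 - ξ*p := div_mul_cancel₀ _ h1p.ne'
  by_cases hx0 : x < 0
  · unfold plmap; rw [if_pos hx0, if_pos hx0]
  · push_neg at hx0
    by_cases hxp : x ≤ p
    · unfold plmap
      rw [if_neg (not_lt.mpr hx0), if_pos hxp,
        if_neg (not_lt.mpr (by positivity : (0:ℝ) ≤ ξ*x)),
        if_pos (by nlinarith : ξ*x ≤ ξ*p)]
      field_simp
    · push_neg at hxp
      by_cases hx1 : x ≤ 1
      · rw [plmap_evalC hp0 hxp hx1]
        have hv1 : (1 - ξ*p)/(1-p) * x + (1 - (1 - ξ*p)/(1-p)) ≤ 1 := by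
          nlinarith [mul_nonneg hm.le (by linarith : (0:ℝ) ≤ 1 - x)]
        have hvp : ξ*p < (1 - ξ*p)/(1-p) * x + (1 - (1 - ξ*p)/(1-p)) := by
          nlinarith [mul_pos hm (by linarith : (0:ℝ) < x - p)]
        rw [plmap_evalC (mul_pos hξ hp0) hvp hv1]
        field_simp
        ring
      · push_neg at hx1
        unfold plmap
        rw [if_neg (not_lt.mpr hx0), if_neg (not_le.mpr hxp), if_neg (not_le.mpr hx1),
          if_neg (not_lt.mpr (by linarith : (0:ℝ) ≤ x)), if_neg (not_le.mpr (by nlinarith)),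
          if_neg (not_le.mpr hx1)]

/-- `plmap` as a permutation of `ℝ`. -/
noncomputable def plperm (ξ p : ℝ) (hξ : 0 < ξ) (hp0 : 0 < p) (hp1 : p < 1)
    (hξp : ξ*p < 1) : Equiv.Perm ℝ where
  toFun := plmap ξ p
  invFun := plmap ξ⁻¹ (ξ*p)
  left_inv := plmap_inv hξ hp0 hp1 hξp
  right_inv := fun y => by
    have h := plmap_inv (inv_pos.mpr hξ) (mul_pos hξ hp0) hξp
      (by rw [inv_mul_cancel_left₀ hξ.ne']; exact hp1) y
    simpa [inv_inv, inv_mul_cancel_left₀ hξ.ne'] using h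

lemma plperm_coe (hξ : 0 < ξ) (hp0 : 0 < p) (hp1 : p < 1) (hξp : ξ*p < 1) :
    ⇑(plperm ξ p hξ hp0 hp1 hξp) = plmap ξ p := rfl

lemma plmap_isPL (hξ : 0 < ξ) (hp0 : 0 < p) (hp1 : p < 1) (hξp : ξ*p < 1) :
    IsPLHomeo (plmap ξ p) := by
  have h1p : (0:ℝ) < 1 - p := by linarith
  have key : (1-ξ*p)/(1-p) * (1-p) = 1 - ξ*p := div_mul_cancel₀ _ h1p.ne'
  refine ⟨(plperm ξ p hξ hp0 hp1 hξp).bijective, plmap_strictMono hξ hp0 hp1 hξp,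
    ?_, ?_, ?_, 2, ![0, p, 1], ?_, rfl, ?_, ?_⟩
  · unfold plmap
    rw [if_neg (by norm_num), if_pos hp0.le]; ring
  · unfold plmap
    rw [if_neg (by norm_num), if_neg (not_le.mpr hp1), if_pos le_rfl]; ring
  · intro x hx
    simp only [mem_Icc, not_and_or, not_le] at hx
    unfold plmap
    rcases hx with h | h
    · rw [if_pos h]
    · rw [if_neg (by linarith), if_neg (by linarith), if_neg (by linarith)]
  · rw [Fin.strictMono_iff_lt_succ]
    intro i
    fin_cases i <;> simp <;> linarith
  · simp [Fin.last]
  · intro i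
    fin_cases i
    · refine ⟨ξ, 0, fun t ht => ?_⟩
      simp only [Fin.castSucc, Fin.succ] at ht
      have ht0 : (0:ℝ) ≤ t := by simpa using ht.1
      have htp : t ≤ p := by simpa using ht.2
      unfold plmap
      rw [if_neg (not_lt.mpr ht0), if_pos htp]; ring
    · refine ⟨(1-ξ*p)/(1-p), 1 - (1-ξ*p)/(1-p), fun t ht => ?_⟩
      have htp : p ≤ t := by simpa using ht.1
      have ht1 : t ≤ 1 := by simpa using ht.2
      unfold plmap
      rw [if_neg (not_lt.mpr (by linarith))]
      by_cases h : t ≤ p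
      · have : t = p := le_antisymm h htp
        subst this
        rw [if_pos le_rfl]
        nlinarith [key]
      · rw [if_neg h, if_pos ht1]

lemma plmap_linear_zero (hp0 : 0 < p) : ∀ t ∈ Icc (0:ℝ) p, plmap ξ p t = ξ * t := by
  intro t ht
  unfold plmap
  rw [if_neg (not_lt.mpr ht.1), if_pos ht.2]

lemma plmap_gt : ∀ a ∈ Ioo (0:ℝ) 1, a < plmap 2 (1/3) a := by
  intro a ha
  unfold plmap
  split_ifs <;> (try push_neg at *) <;> first
    | linarith [ha.1, ha.2]
    | (norm_num; linarith [ha.1, ha.2])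

/-- Every PL homeomorphism is linear near `0`. -/
lemma lin_zero {f : ℝ → ℝ} (hf : IsPLHomeo f) :
    ∃ μ > (0:ℝ), ∃ δ > (0:ℝ), ∀ t ∈ Icc (0:ℝ) δ, f t = μ * t := by
  obtain ⟨hbij, hmono, hf0, hf1, hout, n, x, hx, hx0, hxl, hseg⟩ := hf
  have hn : 0 < n := by
    rcases Nat.eq_zero_or_pos n with h | h
    · subst h
      rw [show Fin.last 0 = 0 from rfl, hx0] at hxl
      norm_num at hxl
    · exact h
  set i : Fin n := ⟨0, hn⟩ with hi
  have hxc : x i.castSucc = 0 := by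
    have : i.castSucc = 0 := by apply Fin.ext; simp [hi]
    rw [this, hx0]
  obtain ⟨c, d, hcd⟩ := hseg i
  have hp : 0 < x i.succ := by
    have h2 := hx (Fin.castSucc_lt_succ (i := i))
    rw [hxc] at h2; exact h2
  have hd : d = 0 := by
    have h0 := hcd 0 (by rw [hxc]; exact ⟨le_rfl, hp.le⟩)
    rw [hf0] at h0; linarith [h0]
  have hc : 0 < c := by
    have h1 := hcd (x i.succ) (by rw [hxc]; exact ⟨hp.le, le_rfl⟩)
    have h2 : f 0 < f (x i.succ) := hmono hp
    rw [hf0, h1, hd] at h2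
    nlinarith
  refine ⟨c, hc, x i.succ, hp, fun t ht => ?_⟩
  rw [hcd t (by rw [hxc]; exact ht), hd, add_zero]

lemma pl_mapsIoo {f : ℝ → ℝ} (hf : IsPLHomeo f) {a : ℝ} (ha : a ∈ Ioo (0:ℝ) 1) :
    f a ∈ Ioo (0:ℝ) 1 := by
  obtain ⟨_, hmono, hf0, hf1, _⟩ := hf
  exact ⟨hf0 ▸ hmono ha.1, hf1 ▸ hmono ha.2⟩

lemma pl_symm_mapsIoo (x : Equiv.Perm ℝ) (hx : IsPLHomeo ⇑x) {a : ℝ}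
    (ha : a ∈ Ioo (0:ℝ) 1) : (x⁻¹ : Equiv.Perm ℝ) a ∈ Ioo (0:ℝ) 1 := by
  obtain ⟨_, hmono, hf0, hf1, _⟩ := hx
  constructor
  · by_contra h
    push_neg at h
    have : (⇑x) ((x⁻¹ : Equiv.Perm ℝ) a) ≤ x 0 := hmono.monotone h
    rw [Equiv.Perm.apply_inv_self, hf0] at this
    linarith [ha.1]
  · by_contra h
    push_neg at h
    have : (⇑x) 1 ≤ (⇑x) ((x⁻¹ : Equiv.Perm ℝ) a) := hmono.monotone h
    rw [Equiv.Perm.apply_inv_self, hf1] at this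
    linarith [ha.2]

/-- Conjugation preserves linearity (with the same slope) near `0`. -/
lemma conj_linear (x g : Equiv.Perm ℝ) (hx : IsPLHomeo ⇑x) {ξ pg : ℝ}
    (hξ : 0 < ξ) (hpg : 0 < pg) (hg : ∀ t ∈ Icc (0:ℝ) pg, (⇑g) t = ξ * t) :
    ∃ δ > (0:ℝ), ∀ t ∈ Icc (0:ℝ) δ, (⇑(x * g * x⁻¹)) t = ξ * t := by
  obtain ⟨μ, hμ, δ₀, hδ₀, hlin⟩ := lin_zero hx
  have hxinv : ∀ t, 0 ≤ t → t ≤ μ * δ₀ → (⇑(x⁻¹ : Equiv.Perm ℝ)) t = t / μ := by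
    intro t ht0 htμ
    have h1 : (⇑x) (t/μ) = t := by
      rw [hlin (t/μ) ⟨by positivity, by rw [div_le_iff₀ hμ]; linarith⟩]
      field_simp
    calc (⇑(x⁻¹ : Equiv.Perm ℝ)) t = (⇑(x⁻¹ : Equiv.Perm ℝ)) ((⇑x) (t/μ)) := by rw [h1]
    _ = t / μ := Equiv.Perm.inv_apply_self x _
  refine ⟨min (μ * δ₀) (min (μ * pg) (μ * δ₀ / ξ)), by positivity, fun t ht => ?_⟩
  obtain ⟨ht0, htδ⟩ := ht
  have h1 : t ≤ μ * δ₀ := le_trans htδ (min_le_left _ _)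
  have h2 : t ≤ μ * pg := le_trans htδ (le_trans (min_le_right _ _) (min_le_left _ _))
  have h3 : t ≤ μ * δ₀ / ξ := le_trans htδ (le_trans (min_le_right _ _) (min_le_right _ _))
  rw [Equiv.Perm.mul_apply, Equiv.Perm.mul_apply, hxinv t ht0 h1]
  rw [hg (t/μ) ⟨by positivity, by rw [div_le_iff₀ hμ]; linarith⟩]
  have h4 : ξ * (t/μ) ≤ δ₀ := by
    rw [le_div_iff₀ hξ] at h3
    rw [mul_comm ξ (t/μ), div_mul_eq_mul_div, div_le_iff₀ hμ]
    nlinarith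
  rw [hlin (ξ * (t/μ)) ⟨by positivity, h4⟩]
  field_simp

/-- Conjugation preserves being above the identity on `(0,1)`. -/
lemma conj_gt (x g : Equiv.Perm ℝ) (hx : IsPLHomeo ⇑x)
    (hgt : ∀ a ∈ Ioo (0:ℝ) 1, a < (⇑g) a) :
    ∀ a ∈ Ioo (0:ℝ) 1, a < (⇑(x * g * x⁻¹)) a := by
  intro a ha
  have hb : (⇑(x⁻¹ : Equiv.Perm ℝ)) a ∈ Ioo (0:ℝ) 1 := pl_symm_mapsIoo x hx ha
  have h1 := hgt _ hb
  have h2 := hx.2.1 h1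
  rw [Equiv.Perm.apply_inv_self] at h2
  rw [Equiv.Perm.mul_apply, Equiv.Perm.mul_apply]
  exact h2

/-- Iterating the inverse of a map that is `2·` near zero halves repeatedly. -/
lemma iter_halve (h : Equiv.Perm ℝ) {δ : ℝ}
    (hlin : ∀ t ∈ Icc (0:ℝ) δ, (⇑h) t = 2 * t) :
    ∀ n : ℕ, ∀ x : ℝ, 0 ≤ x → x ≤ δ → (⇑(h⁻¹ : Equiv.Perm ℝ))^[n] x = x / 2 ^ n := by
  intro n
  induction n with
  | zero => intro x _ _; simp
  | succ n ih =>
    intro x hx0 hxδ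
    have hx2 : (⇑(h⁻¹ : Equiv.Perm ℝ)) x = x / 2 := by
      have h1 : (⇑h) (x/2) = x := by
        rw [hlin (x/2) ⟨by linarith, by linarith⟩]; ring
      calc (⇑(h⁻¹ : Equiv.Perm ℝ)) x = (⇑(h⁻¹ : Equiv.Perm ℝ)) ((⇑h) (x/2)) := by rw [h1]
      _ = x / 2 := Equiv.Perm.inv_apply_self h _
    rw [Function.iterate_succ_apply, hx2, ih (x/2) (by linarith) (by linarith)]
    rw [pow_succ]
    ring

/-- Iterating a map that is `2·` near zero doubles repeatedly, while in range. -/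
lemma iter_double (h : Equiv.Perm ℝ) {δ : ℝ}
    (hlin : ∀ t ∈ Icc (0:ℝ) δ, (⇑h) t = 2 * t) :
    ∀ n : ℕ, ∀ x : ℝ, 0 ≤ x → 2 ^ n * x ≤ δ → (⇑h)^[n] x = 2 ^ n * x := by
  intro n
  induction n with
  | zero => intro x _ _; simp
  | succ n ih =>
    intro x hx0 hxδ
    have h2n : (1:ℝ) ≤ 2 ^ (n+1) := one_le_pow₀ (by norm_num)
    have hxδ' : x ≤ δ := by nlinarith
    rw [Function.iterate_succ_apply, hlin x ⟨hx0, hxδ'⟩,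
      ih (2*x) (by linarith) (by rw [← mul_assoc, mul_comm ((2:ℝ)^n) 2, ← pow_succ']; exact hxδ)]
    rw [pow_succ]
    ring

/-- Pushing a point of `(0,1)` into `(0,δ]` by iterating the inverse of a map
above the identity. -/
lemma iter_small (h : Equiv.Perm ℝ) (hPL : IsPLHomeo ⇑h)
    (hgt : ∀ a ∈ Ioo (0:ℝ) 1, a < (⇑h) a) {s δ : ℝ}
    (hs : s ∈ Ioo (0:ℝ) 1) (hδ : 0 < δ) :
    ∃ n : ℕ, (⇑(h⁻¹ : Equiv.Perm ℝ))^[n] s ∈ Ioo (0:ℝ) 1 ∧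
      (⇑(h⁻¹ : Equiv.Perm ℝ))^[n] s ≤ δ := by
  have hmono : StrictMono (⇑h) := hPL.2.1
  set u : ℕ → ℝ := fun n => (⇑(h⁻¹ : Equiv.Perm ℝ))^[n] s with hu
  have hmem : ∀ n, u n ∈ Ioo (0:ℝ) 1 := by
    intro n
    induction n with
    | zero => exact hs
    | succ n ih =>
      have : u (n+1) = (⇑(h⁻¹ : Equiv.Perm ℝ)) (u n) := Function.iterate_succ_apply' _ _ _
      rw [this]
      exact pl_symm_mapsIoo h hPL ih
  have hsucc : ∀ n, u (n+1) = (⇑(h⁻¹ : Equiv.Perm ℝ)) (u n) :=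
    fun n => Function.iterate_succ_apply' _ _ _
  have hinvmono : Monotone (⇑(h⁻¹ : Equiv.Perm ℝ)) := by
    intro a b hab
    by_contra hcon
    push_neg at hcon
    have := hmono hcon
    rw [Equiv.Perm.apply_inv_self, Equiv.Perm.apply_inv_self] at this
    linarith
  have hBdd : BddBelow (Set.range u) := ⟨0, fun y ⟨n, hn⟩ => hn ▸ (hmem n).1.le⟩
  set L := ⨅ n, u n with hL
  have hLle : ∀ n, L ≤ u n := fun n => ciInf_le hBdd n
  have hL0 : 0 ≤ L := le_ciInf fun n => (hmem n).1.le
  have hstep : ∀ n, u (n+1) < u n := by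
    intro n
    rw [hsucc n]
    have hlt : (⇑h) ((⇑(h⁻¹ : Equiv.Perm ℝ)) (u n)) < (⇑h) (u n) := by
      rw [Equiv.Perm.apply_inv_self]
      exact hgt _ (hmem n)
    exact hmono.lt_iff_lt.mp hlt
  have hinvL : (⇑(h⁻¹ : Equiv.Perm ℝ)) L ≤ L := by
    apply le_ciInf
    intro n
    calc (⇑(h⁻¹ : Equiv.Perm ℝ)) L ≤ (⇑(h⁻¹ : Equiv.Perm ℝ)) (u n) := hinvmono (hLle n)
    _ = u (n+1) := (hsucc n).symm
    _ ≤ u n := (hstep n).le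
  have hhL : (⇑h) L ≤ L := by
    apply le_ciInf
    intro n
    have h1 : L ≤ (⇑(h⁻¹ : Equiv.Perm ℝ)) (u n) := (hsucc n) ▸ hLle (n+1)
    have h2 := hmono.monotone h1
    rwa [Equiv.Perm.apply_inv_self] at h2
  have hLfix : (⇑h) L = L := by
    have h2 := hmono.monotone hinvL
    rw [Equiv.Perm.apply_inv_self] at h2
    exact le_antisymm hhL h2
  have hL1 : L < 1 := lt_of_le_of_lt (by simpa [hu] using hLle 0) hs.2
  have hLzero : L = 0 := by
    rcases hL0.eq_or_lt with h | h
    · exact h.symm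
    · exact absurd hLfix (by have := hgt L ⟨h, hL1⟩; linarith)
  have hlt : ⨅ n, u n < δ := by rw [← hL, hLzero]; exact hδ
  obtain ⟨n, hn⟩ := exists_lt_of_ciInf_lt hlt
  exact ⟨n, hmem n, hn.le⟩

end ClassfulAux

open ClassfulAux

/-- Every classful subgroup of the group `P` of all orientation-preserving PL
homeomorphisms of `[0,1]` acts transitively on `(0,1)`. -/
theorem classful_subgroup_of_P_transitive
    (H : Subgroup (Equiv.Perm ℝ))
    (hHPL : ∀ h ∈ H, IsPLHomeo h)
    (hclassful : ∀ g : Equiv.Perm ℝ, IsPLHomeo g →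
      ∃ x : Equiv.Perm ℝ, IsPLHomeo x ∧ x * g * x⁻¹ ∈ H) :
    ∀ s ∈ Ioo (0:ℝ) 1, ∀ t ∈ Ioo (0:ℝ) 1, ∃ h ∈ H, h s = t := by
  intro s hs t ht
  -- the doubling element h₀
  have c2 : (0:ℝ) < 2 := by norm_num
  have c3 : (0:ℝ) < 1/3 := by norm_num
  have c3' : (1:ℝ)/3 < 1 := by norm_num
  have c23 : (2:ℝ) * (1/3) < 1 := by norm_num
  obtain ⟨x₀, hx₀PL, h₀mem⟩ := hclassful (plperm 2 (1/3) c2 c3 c3' c23)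
    (plmap_isPL c2 c3 c3' c23)
  set h₀ : Equiv.Perm ℝ := x₀ * plperm 2 (1/3) c2 c3 c3' c23 * x₀⁻¹ with hh₀
  have h₀PL : IsPLHomeo ⇑h₀ := hHPL _ h₀mem
  have h₀gt : ∀ a ∈ Ioo (0:ℝ) 1, a < (⇑h₀) a :=
    conj_gt x₀ (plperm 2 (1/3) c2 c3 c3' c23) hx₀PL plmap_gt
  obtain ⟨δ₀, hδ₀, h₀lin⟩ := conj_linear x₀ (plperm 2 (1/3) c2 c3 c3' c23) hx₀PL c2 c3 (plmap_linear_zero c3)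
  -- push s and t near 0
  obtain ⟨N, hsmem, hsle⟩ := iter_small h₀ h₀PL h₀gt hs hδ₀
  obtain ⟨M, htmem, htle⟩ := iter_small h₀ h₀PL h₀gt ht hδ₀
  set s' : ℝ := (⇑(h₀⁻¹ : Equiv.Perm ℝ))^[N] s with hs'
  set t' : ℝ := (⇑(h₀⁻¹ : Equiv.Perm ℝ))^[M] t with ht'
  -- the ratio, normalized into (1/2, 1]
  have hrpos : 0 < t'/s' := div_pos htmem.1 hsmem.1
  obtain ⟨kk, hk1, hk2⟩ := exists_mem_Ioc_zpow hrpos one_lt_two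
  set k : ℤ := -(kk+1) with hk
  set ξ : ℝ := 2^k * (t'/s') with hξdef
  have h2kpos : (0:ℝ) < 2^k := zpow_pos two_pos k
  have hξhalf : 1/2 < ξ := by
    have h1 : (2:ℝ)^k * 2^kk = 1/2 := by
      rw [← zpow_add₀ (two_ne_zero : (2:ℝ) ≠ 0), show k + kk = -1 by omega]
      norm_num
    have := mul_lt_mul_of_pos_left hk1 h2kpos
    rw [h1] at this
    exact this
  have hξ1 : ξ ≤ 1 := by
    have h1 : (2:ℝ)^k * 2^(kk+1) = 1 := by
      rw [← zpow_add₀ (two_ne_zero : (2:ℝ) ≠ 0), show k + (kk+1) = 0 by omega, zpow_zero]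
    have := mul_le_mul_of_nonneg_left hk2 h2kpos.le
    rw [h1] at this
    exact this
  have hξ0 : 0 < ξ := by linarith
  have ch : (0:ℝ) < 1/2 := by norm_num
  have ch' : (1:ℝ)/2 < 1 := by norm_num
  have chξ : ξ * (1/2) < 1 := by linarith
  -- the slope-ξ element h₁
  obtain ⟨x₁, hx₁PL, h₁mem⟩ := hclassful (plperm ξ (1/2) hξ0 ch ch' chξ)
    (plmap_isPL hξ0 ch ch' chξ)
  set h₁ : Equiv.Perm ℝ := x₁ * plperm ξ (1/2) hξ0 ch ch' chξ * x₁⁻¹ with hh₁def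
  obtain ⟨δ₁, hδ₁, h₁lin⟩ := conj_linear x₁ (plperm ξ (1/2) hξ0 ch ch' chξ) hx₁PL hξ0 ch (plmap_linear_zero ch)
  -- choice of exponents
  obtain ⟨a₁, ha₁⟩ := pow_unbounded_of_one_lt (s'/δ₁) (one_lt_two : (1:ℝ) < 2)
  set a : ℕ := max a₁ k.toNat with ha
  set b : ℕ := ((a:ℤ) - k).toNat with hb
  have hka : k ≤ (a:ℤ) := by
    have h1 : k ≤ (k.toNat : ℤ) := Int.self_le_toNat k
    have h2 : (k.toNat : ℤ) ≤ (a : ℤ) := by exact_mod_cast le_max_right a₁ k.toNat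
    omega
  have hab : (b:ℤ) = (a:ℤ) - k := Int.toNat_of_nonneg (by omega)
  have h2apos : (0:ℝ) < 2^a := pow_pos two_pos a
  have h2bpos : (0:ℝ) < 2^b := pow_pos two_pos b
  set s'' : ℝ := s'/2^a with hs''
  have hs''pos : 0 < s'' := div_pos hsmem.1 h2apos
  have hs''δ₁ : s'' ≤ δ₁ := by
    have h2a : (2:ℝ)^a₁ ≤ 2^a := pow_le_pow_right₀ (by norm_num) (le_max_left _ _)
    rw [div_lt_iff₀ hδ₁] at ha₁
    rw [hs'', div_le_iff₀ h2apos]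
    nlinarith
  set t'' : ℝ := ξ * s'' with ht''
  have ht''pos : 0 < t'' := mul_pos hξ0 hs''pos
  have h2key : (2:ℝ)^b * 2^k = 2^a := by
    rw [← zpow_natCast (2:ℝ) b, ← zpow_natCast (2:ℝ) a, ← zpow_add₀
      (two_ne_zero : (2:ℝ) ≠ 0), hab]
    norm_num
  have ht''eq : t'' = t'/2^b := by
    rw [ht'', hξdef, hs'']
    have hs'ne : s' ≠ 0 := hsmem.1.ne'
    field_simp
    nlinarith [h2key]
  have h2bt : 2^b * t'' = t' := by
    rw [ht''eq]
    field_simp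
  -- compute the action of the composition
  have hs'a : (⇑(h₀⁻¹ : Equiv.Perm ℝ))^[a] s' = s'' :=
    iter_halve h₀ h₀lin a s' hsmem.1.le hsle
  have hsNa : (⇑(h₀⁻¹ : Equiv.Perm ℝ))^[N+a] s = s'' := by
    rw [add_comm, Function.iterate_add_apply, ← hs', hs'a]
  have hh₁s : (⇑h₁) s'' = t'' := by
    rw [h₁lin s'' ⟨hs''pos.le, hs''δ₁⟩, ht'']
  have hdb : (⇑h₀)^[b] t'' = t' := by
    rw [iter_double h₀ h₀lin b t'' ht''pos.le (by rw [h2bt]; exact htle)]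
    exact h2bt
  have hMt : (⇑h₀)^[M] t' = t := by
    have hli : Function.LeftInverse (⇑h₀) (⇑(h₀⁻¹ : Equiv.Perm ℝ)) :=
      fun y => Equiv.Perm.apply_inv_self h₀ y
    rw [ht']
    exact hli.iterate M t
  refine ⟨h₀^(M+b) * h₁ * (h₀⁻¹)^(N+a), ?_, ?_⟩
  · exact H.mul_mem (H.mul_mem (H.pow_mem h₀mem _) h₁mem)
      (H.pow_mem (H.inv_mem h₀mem) _)
  · show (⇑(h₀^(M+b) * h₁ * (h₀⁻¹)^(N+a))) s = t
    rw [Equiv.Perm.mul_apply, Equiv.Perm.mul_apply, Equiv.Perm.coe_pow,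
      Equiv.Perm.coe_pow, hsNa, hh₁s, Function.iterate_add_apply, hdb, hMt]
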